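/- arXiv:1004.0323 — 7 statements merged into one kernel-verified Lean document; each statement's English description precedes it below -/
import Mathlib

section
/- Let X and Y be locally compact, σ-compact Hausdorff spaces and let f : X → Y be a function. Then f is continuous if and only if its graph {(x, f x) : x ∈ X} is a closed subset of X × Y and f(A) is compact for every compact subset A of X. -/
/-!
A map into a compact space with closed graph is continuous, because `f ⁻¹' C` is the
projection of the closed set `graph f ∩ (X ×ˢ C)` and projecting along a compact factor is a
closed map. Around each point of `X` take a compact neighbourhood `K`; then `f` maps `K` into the
compact set `f '' K`, its restriction there still has closed graph, so `f` is continuous on `K`.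
-/

open Set Topology

section ClosedGraph

variable {X Y : Type*} [TopologicalSpace X] [TopologicalSpace Y] {f : X → Y}

theorem continuous_of_isClosed_graph [CompactSpace Y]
    (hf : IsClosed {p : X × Y | p.2 = f p.1}) : Continuous f := by
  refine continuous_iff_isClosed.mpr fun C hC => ?_
  have hpre : f ⁻¹' C = Prod.fst '' ({p : X × Y | p.2 = f p.1} ∩ Prod.snd ⁻¹' C) := by
    ext x
    constructor
    · intro hx
      exact ⟨(x, f x), ⟨rfl, hx⟩, rfl⟩
    · rintro ⟨⟨x', y⟩, ⟨hy, hyC⟩, rfl⟩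
      exact (hy ▸ hyC : f x' ∈ C)
  rw [hpre]
  exact isClosedMap_fst_of_compactSpace _ (hf.inter (hC.preimage continuous_snd))

theorem continuousOn_of_isClosed_graph_of_isCompact_image {K : Set X}
    (hf : IsClosed {p : X × Y | p.2 = f p.1}) (hK : IsCompact (f '' K)) : ContinuousOn f K := by
  have : CompactSpace (f '' K) := isCompact_iff_compactSpace.mp hK
  let g : K → f '' K := (mapsTo_image f K).restrict f K (f '' K)
  have hg : IsClosed {p : K × f '' K | p.2 = g p.1} := by
    have hval : Continuous fun p : K × f '' K => ((p.1 : X), (p.2 : Y)) := by fun_prop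
    convert hf.preimage hval using 1
    ext p
    exact Subtype.ext_iff
  rw [continuousOn_iff_continuous_domRestrict]
  exact continuous_subtype_val.comp (continuous_of_isClosed_graph hg)

end ClosedGraph

theorem continuous_iff_graph_closed_and_mapsCompact_general
    {X Y : Type*} [TopologicalSpace X] [LocallyCompactSpace X]
    [TopologicalSpace Y] [T2Space Y]
    (f : X → Y) :
    Continuous f ↔
      (IsClosed {p : X × Y | p.2 = f p.1} ∧
        ∀ A : Set X, IsCompact A → IsCompact (f '' A)) := by
  refine ⟨fun hf => ⟨isClosed_eq continuous_snd (hf.comp continuous_fst),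
    fun A hA => hA.image hf⟩, fun ⟨hclosed, hcomp⟩ => ?_⟩
  refine continuous_iff_continuousAt.mpr fun x => ?_
  obtain ⟨K, hK, hKx⟩ := exists_compact_mem_nhds x
  exact (continuousOn_of_isClosed_graph_of_isCompact_image hclosed (hcomp K hK)).continuousAt hKx

/-- For locally compact, σ-compact Hausdorff spaces `X`, `Y` and a function
`f : X → Y`, `f` is continuous iff its graph is closed in `X × Y` and `f` maps compact
sets to compact sets (i.e. the graph of `f` is a +proper relation). -/
theorem continuous_iff_graph_closed_and_mapsCompact
    {X Y : Type*} [TopologicalSpace X] [LocallyCompactSpace X]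
    [SigmaCompactSpace X] [T2Space X]
    [TopologicalSpace Y] [LocallyCompactSpace Y] [SigmaCompactSpace Y] [T2Space Y]
    (f : X → Y) :
    Continuous f ↔
      (IsClosed {p : X × Y | p.2 = f p.1} ∧
        ∀ A : Set X, IsCompact A → IsCompact (f '' A)) :=
  continuous_iff_graph_closed_and_mapsCompact_general f
end

section
/- Let f be a +proper closed relation on a locally compact, σ-compact Hausdorff space X. Then 𝒢f = f ∪ (𝒢f ∘ f). If moreover f is proper (both f and f⁻¹ are +proper), then also 𝒢f = f ∪ (f ∘ 𝒢f). -/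
/-- The image of a set `A` under a relation `f ⊆ X × Y`. -/
def relImage {X Y : Type*} (f : Set (X × Y)) (A : Set X) : Set Y :=
  {y | ∃ x ∈ A, (x, y) ∈ f}

/-- The reverse (inverse) relation of `f ⊆ X × Y`. -/
def relInv {X Y : Type*} (f : Set (X × Y)) : Set (Y × X) :=
  {p | (p.2, p.1) ∈ f}

/-- Composition of relations: `relComp g f = g ∘ f` (first `f`, then `g`). -/
def relComp {X Y Z : Type*} (g : Set (Y × Z)) (f : Set (X × Y)) : Set (X × Z) :=
  {p | ∃ y, (p.1, y) ∈ f ∧ (y, p.2) ∈ g}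

/-- A relation on `X` is transitive. -/
def RelTrans {X : Type*} (f : Set (X × X)) : Prop :=
  ∀ x y z : X, (x, y) ∈ f → (y, z) ∈ f → (x, z) ∈ f

/-- `gRel f` is the smallest closed transitive relation containing `f`:
the intersection of all closed transitive relations containing `f`. -/
def gRel {X : Type*} [TopologicalSpace X] (f : Set (X × X)) : Set (X × X) :=
  ⋂₀ {g : Set (X × X) | f ⊆ g ∧ IsClosed g ∧ RelTrans g}

/-!
The inclusion `f ∪ 𝒢f ∘ f ⊆ 𝒢f` is immediate. Conversely, `f ∪ 𝒢f ∘ f` contains `f` and is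
transitive, and it is closed because composing a closed relation after a closed +proper relation
on a locally compact space gives a closed relation; hence it contains `𝒢f`. The second identity
is the first one for `f⁻¹`, inverted, since `𝒢(f⁻¹) = (𝒢f)⁻¹`.
-/

open Filter Topology Set

section Relations

variable {X Y Z : Type*}

@[simp]
lemma relInv_relInv (f : Set (X × Y)) : relInv (relInv f) = f := rfl

lemma relInv_union (f f' : Set (X × Y)) : relInv (f ∪ f') = relInv f ∪ relInv f' := rfl

lemma relInv_relComp (g : Set (Y × Z)) (f : Set (X × Y)) :
    relInv (relComp g f) = relComp (relInv f) (relInv g) := by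
  ext ⟨z, x⟩
  exact exists_congr fun _ => and_comm

lemma relInv_subset_relInv {f f' : Set (X × Y)} (h : f ⊆ f') : relInv f ⊆ relInv f' :=
  fun _ hp => h hp

lemma RelTrans.relInv {f : Set (X × X)} (hf : RelTrans f) : RelTrans (relInv f) :=
  fun x y z hxy hyz => hf z y x hyz hxy

lemma RelTrans.union_relComp {f g : Set (X × X)} (hg : RelTrans g) (hfg : f ⊆ g) :
    RelTrans (f ∪ relComp g f) := by
  rintro x y z (hxy | ⟨w, hxw, hwy⟩) (hyz | ⟨w', hyw', hw'z⟩)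
  · exact Or.inr ⟨y, hxy, hfg hyz⟩
  · exact Or.inr ⟨y, hxy, hg _ _ _ (hfg hyw') hw'z⟩
  · exact Or.inr ⟨w, hxw, hg _ _ _ hwy (hfg hyz)⟩
  · exact Or.inr ⟨w, hxw, hg _ _ _ hwy (hg _ _ _ (hfg hyw') hw'z)⟩

lemma relComp_subset_of_relTrans {f g : Set (X × X)} (hg : RelTrans g) (hfg : f ⊆ g) :
    relComp g f ⊆ g :=
  fun _ ⟨_, hf, hg'⟩ => hg _ _ _ (hfg hf) hg'

end Relations

section Topology

variable {X Y Z : Type*} [TopologicalSpace X] [TopologicalSpace Y] [TopologicalSpace Z]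

lemma isClosed_relInv {f : Set (X × Y)} (hf : IsClosed f) : IsClosed (relInv f) :=
  hf.preimage continuous_swap

/-- Near `(x, z)`, the middle points of `g ∘ f` lie in the compact set `f(K)` for a compact
neighbourhood `K` of `x`; a cluster point of them witnesses `(x, z) ∈ g ∘ f`. -/
lemma isClosed_relComp [WeaklyLocallyCompactSpace X] {f : Set (X × Y)} {g : Set (Y × Z)}
    (hf : IsClosed f) (hg : IsClosed g)
    (hfK : ∀ K : Set X, IsCompact K → IsCompact (relImage f K)) :
    IsClosed (relComp g f) := by
  refine isClosed_of_closure_subset fun ⟨x, z⟩ hxz => ?_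
  obtain ⟨U, hU, hUxz⟩ := mem_closure_iff_ultrafilter.1 hxz
  obtain ⟨-, y₀, -⟩ := U.nonempty_of_mem hU
  have : Nonempty Y := ⟨y₀⟩
  choose! φ hφf hφg using fun p (hp : p ∈ relComp g f) => hp
  obtain ⟨K, hK, hKx⟩ := exists_compact_mem_nhds x
  have hfst : Tendsto Prod.fst (U : Filter (X × Z)) (𝓝 x) :=
    (continuous_fst.tendsto (x, z)).mono_left hUxz
  have hsnd : Tendsto Prod.snd (U : Filter (X × Z)) (𝓝 z) :=
    (continuous_snd.tendsto (x, z)).mono_left hUxz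
  have hφK : ∀ᶠ p in (U : Filter (X × Z)), φ p ∈ relImage f K := by
    filter_upwards [hU, hfst hKx] with p hp hpK using ⟨p.1, hpK, hφf p hp⟩
  obtain ⟨y, -, hy⟩ := (hfK K hK).ultrafilter_le_nhds (U.map φ) (le_principal_iff.2 hφK)
  have hy : Tendsto φ U (𝓝 y) := hy
  exact ⟨y, hf.mem_of_tendsto (hfst.prodMk_nhds hy) (mem_of_superset hU hφf),
    hg.mem_of_tendsto (hy.prodMk_nhds hsnd) (mem_of_superset hU hφg)⟩

end Topology

section GRel

variable {X : Type*} [TopologicalSpace X]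

lemma subset_gRel (f : Set (X × X)) : f ⊆ gRel f :=
  fun _ hp _ hg => hg.1 hp

lemma isClosed_gRel (f : Set (X × X)) : IsClosed (gRel f) :=
  isClosed_sInter fun _ hg => hg.2.1

lemma relTrans_gRel (f : Set (X × X)) : RelTrans (gRel f) :=
  fun x y z hxy hyz g hg => hg.2.2 x y z (hxy g hg) (hyz g hg)

lemma gRel_subset {f g : Set (X × X)} (hfg : f ⊆ g) (hg : IsClosed g) (hg' : RelTrans g) :
    gRel f ⊆ g :=
  sInter_subset_of_mem ⟨hfg, hg, hg'⟩

lemma gRel_relInv_subset (f : Set (X × X)) : gRel (relInv f) ⊆ relInv (gRel f) :=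
  gRel_subset (relInv_subset_relInv (subset_gRel f)) (isClosed_relInv (isClosed_gRel f))
    (relTrans_gRel f).relInv

lemma relInv_gRel (f : Set (X × X)) : relInv (gRel f) = gRel (relInv f) := by
  refine Subset.antisymm ?_ (gRel_relInv_subset f)
  simpa using relInv_subset_relInv (gRel_relInv_subset (relInv f))

lemma gRel_eq_union_relComp_of_isClosed {f : Set (X × X)} (hf : IsClosed f)
    (hcomp : IsClosed (relComp (gRel f) f)) : gRel f = f ∪ relComp (gRel f) f :=
  (gRel_subset subset_union_left (hf.union hcomp)
    ((relTrans_gRel f).union_relComp (subset_gRel f))).antisymm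
    (union_subset (subset_gRel f) (relComp_subset_of_relTrans (relTrans_gRel f) (subset_gRel f)))

lemma gRel_eq_union_relComp [WeaklyLocallyCompactSpace X] {f : Set (X × X)} (hf : IsClosed f)
    (hfK : ∀ K : Set X, IsCompact K → IsCompact (relImage f K)) :
    gRel f = f ∪ relComp (gRel f) f :=
  gRel_eq_union_relComp_of_isClosed hf (isClosed_relComp hf (isClosed_gRel f) hfK)

end GRel

theorem gRel_eq_union_comp_general
    {X : Type*} [TopologicalSpace X] [LocallyCompactSpace X]
    (f : Set (X × X)) (hf : IsClosed f)
    (hplus : ∀ A : Set X, IsCompact A → IsCompact (relImage f A)) :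
    gRel f = f ∪ relComp (gRel f) f ∧
      ((∀ A : Set X, IsCompact A → IsCompact (relImage (relInv f) A)) →
        gRel f = f ∪ relComp f (gRel f)) := by
  refine ⟨gRel_eq_union_relComp hf hplus, fun hplusInv => ?_⟩
  have h := congrArg relInv (gRel_eq_union_relComp (isClosed_relInv hf) hplusInv)
  rwa [relInv_gRel, relInv_relInv, relInv_union, relInv_relComp, relInv_relInv,
    ← relInv_gRel, relInv_relInv] at h

/-- For a +proper closed relation `f` on a locally compact, σ-compact
Hausdorff space, `𝒢f = f ∪ 𝒢f ∘ f`; and if moreover `f` is proper (i.e. `f⁻¹` is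
also +proper) then `𝒢f = f ∪ f ∘ 𝒢f`. -/
theorem gRel_eq_union_comp
    {X : Type*} [TopologicalSpace X] [LocallyCompactSpace X]
    [SigmaCompactSpace X] [T2Space X]
    (f : Set (X × X)) (hf : IsClosed f)
    (hplus : ∀ A : Set X, IsCompact A → IsCompact (relImage f A)) :
    gRel f = f ∪ relComp (gRel f) f ∧
      ((∀ A : Set X, IsCompact A → IsCompact (relImage (relInv f) A)) →
        gRel f = f ∪ relComp f (gRel f)) :=
  gRel_eq_union_comp_general f hf hplus
end

section
/- Let f be a closed relation on a locally compact, σ-compact Hausdorff space X. The following are equivalent: (a) f is +proper; (b) for every compact Hausdorff space X̂ and every topological embedding j : X → X̂ with j(X) open and dense, the closure f̂ of (j × j)(f) in X̂ × X̂ satisfies f̂(j(X)) ⊆ j(X); (c) there exist a compact Hausdorff space X̂ and a topological embedding j : X → X̂ with j(X) open and dense such that the closure f̂ of (j × j)(f) satisfies f̂(j(X)) ⊆ j(X). -/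
/-- `Xh` (with embedding `j`) is a proper compactification of `X`: `Xh` is compact
Hausdorff and `j` is a topological embedding with open dense image. -/
def IsProperCompactification (X : Type u) [TopologicalSpace X]
    (Xh : Type u) [TopologicalSpace Xh] (j : X → Xh) : Prop :=
  CompactSpace Xh ∧ T2Space Xh ∧ Topology.IsEmbedding j ∧
    IsOpen (Set.range j) ∧ Dense (Set.range j)

/-- The closure `f̂` of `(j × j)(f)` in `Xh × Xh` maps the copy of `X` into itself:
`f̂(j(X)) ⊆ j(X)`. -/
def HatMapsIntoX {X : Type u} [TopologicalSpace X] (f : Set (X × X))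
    (Xh : Type u) [TopologicalSpace Xh] (j : X → Xh) : Prop :=
  relImage (closure (Prod.map j j '' f)) (Set.range j) ⊆ Set.range j

/-!
For (a) ⇒ (b): given `x ∈ X`, choose a compact neighbourhood `K` of `x`. Near `(j x, ·)`
the closure `f̂` only sees pairs coming from `K × f(K)`, so `f̂(j x) ⊆ j(f(K))`, which is
compact, hence closed in `X̂`. For (c) ⇒ (a): for compact `A`, the set `f̂(j(A))` is compact
in `X̂` and lies in `j(X)`, so its preimage is a compact subset `L` of `X` containing `f(A)`;
then `f(A)` is the projection of the compact set `f ∩ (A × L)`.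
Finally (b) ⇒ (c) because every locally compact Hausdorff space has a proper
compactification: itself if it is compact, its one-point compactification otherwise.
-/

open Set Topology

section RelImage

variable {X Y : Type*}

lemma relImage_mono {f : Set (X × Y)} {A B : Set X} (h : A ⊆ B) :
    relImage f A ⊆ relImage f B :=
  fun _ ⟨x, hx, hxy⟩ => ⟨x, h hx, hxy⟩

lemma relImage_eq_image_snd_inter_prod {f : Set (X × Y)} {A : Set X} {K : Set Y}
    (h : relImage f A ⊆ K) : relImage f A = Prod.snd '' (f ∩ A ×ˢ K) := by
  ext y
  constructor
  · rintro ⟨x, hx, hxy⟩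
    exact ⟨(x, y), ⟨hxy, hx, h ⟨x, hx, hxy⟩⟩, rfl⟩
  · rintro ⟨⟨x, y⟩, ⟨hxy, hx, -⟩, rfl⟩
    exact ⟨x, hx, hxy⟩

lemma relImage_subset_preimage_relImage_closure_image {X' Y' : Type*} [TopologicalSpace X']
    [TopologicalSpace Y'] (f : Set (X × Y)) (i : X → X') (j : Y → Y') (A : Set X) :
    relImage f A ⊆ j ⁻¹' relImage (closure (Prod.map i j '' f)) (i '' A) :=
  fun y ⟨x, hx, hxy⟩ => ⟨i x, mem_image_of_mem i hx, subset_closure ⟨(x, y), hxy, rfl⟩⟩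

variable [TopologicalSpace X] [TopologicalSpace Y]

lemma IsClosed.isCompact_relImage_of_subset {f : Set (X × Y)} (hf : IsClosed f)
    {A : Set X} {K : Set Y} (hA : IsCompact A) (hK : IsCompact K) (h : relImage f A ⊆ K) :
    IsCompact (relImage f A) := by
  rw [relImage_eq_image_snd_inter_prod h]
  exact ((hA.prod hK).inter_left hf).image continuous_snd

lemma IsClosed.isCompact_relImage [CompactSpace Y] {f : Set (X × Y)} (hf : IsClosed f)
    {A : Set X} (hA : IsCompact A) : IsCompact (relImage f A) :=
  hf.isCompact_relImage_of_subset hA isCompact_univ (subset_univ _)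

end RelImage

section ProperCompactification

variable {X Xh : Type u} [TopologicalSpace X] [TopologicalSpace Xh] {j : X → Xh}

lemma hatMapsIntoX_of_isCompact_relImage [LocallyCompactSpace X] {f : Set (X × X)}
    (hprop : ∀ A : Set X, IsCompact A → IsCompact (relImage f A))
    (hc : IsProperCompactification X Xh j) : HatMapsIntoX f Xh j := by
  obtain ⟨-, _, hemb, hopen, -⟩ := hc
  rintro _ ⟨_, ⟨x, rfl⟩, hxy⟩
  obtain ⟨K, hK, hKx⟩ := exists_compact_mem_nhds x
  have hU : IsOpen (j '' interior K) :=
    (IsOpenEmbedding.isOpenMap ⟨hemb, hopen⟩) _ isOpen_interior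
  have hxU : j x ∈ j '' interior K := mem_image_of_mem j (mem_interior_iff_mem_nhds.mpr hKx)
  have hlocal : (j '' interior K) ×ˢ univ ∩ Prod.map j j '' f ⊆ univ ×ˢ (j '' relImage f K) := by
    rintro _ ⟨⟨⟨a', ha', hja⟩, -⟩, ⟨a, b⟩, hab, rfl⟩
    obtain rfl : a' = a := hemb.injective hja
    exact ⟨trivial, b, ⟨a', interior_subset ha', hab⟩, rfl⟩
  have hclosed : IsClosed (univ ×ˢ (j '' relImage f K)) :=
    (isClosed_univ (X := Xh)).prod ((hprop K hK).image hemb.continuous).isClosed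
  obtain ⟨-, y, -, rfl⟩ := hclosed.closure_subset_iff.mpr hlocal
    ((hU.prod isOpen_univ).inter_closure ⟨⟨hxU, trivial⟩, hxy⟩)
  exact mem_range_self y

lemma isCompact_relImage_of_hatMapsIntoX {f : Set (X × X)} (hf : IsClosed f)
    (hc : IsProperCompactification X Xh j) (hm : HatMapsIntoX f Xh j)
    {A : Set X} (hA : IsCompact A) : IsCompact (relImage f A) := by
  obtain ⟨_, -, hemb, -, -⟩ := hc
  set B := relImage (closure (Prod.map j j '' f)) (j '' A)
  have hB : IsCompact B := isClosed_closure.isCompact_relImage (hA.image hemb.continuous)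
  have hBj : B ⊆ range j := (relImage_mono (image_subset_range j A)).trans hm
  exact hf.isCompact_relImage_of_subset hA (hemb.isInducing.isCompact_preimage' hB hBj)
    (relImage_subset_preimage_relImage_closure_image f j j A)

end ProperCompactification

lemma exists_isProperCompactification (X : Type u) [TopologicalSpace X] [T2Space X]
    [LocallyCompactSpace X] :
    ∃ (Xh : Type u) (t : TopologicalSpace Xh) (j : X → Xh),
      @IsProperCompactification X _ Xh t j := by
  by_cases hX : CompactSpace X
  · exact ⟨X, ‹_›, id, hX, ‹_›, IsEmbedding.id, by simp, by simp⟩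
  · have : NoncompactSpace X := not_compactSpace_iff.mp hX
    exact ⟨OnePoint X, inferInstance, (↑), inferInstance, inferInstance,
      OnePoint.isOpenEmbedding_coe.isEmbedding, OnePoint.isOpenEmbedding_coe.isOpen_range,
      OnePoint.denseRange_coe⟩

theorem plusProper_iff_invariant_compactifications_general
    {X : Type u} [TopologicalSpace X] [LocallyCompactSpace X]
    [T2Space X]
    (f : Set (X × X)) (hf : IsClosed f) :
    ((IsClosed f ∧ ∀ A : Set X, IsCompact A → IsCompact (relImage f A)) ↔
      (∀ (Xh : Type u) (t : TopologicalSpace Xh) (j : X → Xh),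
        @IsProperCompactification X _ Xh t j → @HatMapsIntoX X _ f Xh t j)) ∧
    ((∀ (Xh : Type u) (t : TopologicalSpace Xh) (j : X → Xh),
        @IsProperCompactification X _ Xh t j → @HatMapsIntoX X _ f Xh t j) ↔
      (∃ (Xh : Type u) (t : TopologicalSpace Xh) (j : X → Xh),
        @IsProperCompactification X _ Xh t j ∧ @HatMapsIntoX X _ f Xh t j)) := by
  obtain ⟨Xh₀, t₀, j₀, hc₀⟩ := exists_isProperCompactification X
  have proper_of_some : (∃ (Xh : Type u) (t : TopologicalSpace Xh) (j : X → Xh),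
      @IsProperCompactification X _ Xh t j ∧ @HatMapsIntoX X _ f Xh t j) →
      ∀ A : Set X, IsCompact A → IsCompact (relImage f A) :=
    fun ⟨_, _, _, hc, hm⟩ _ hA => isCompact_relImage_of_hatMapsIntoX hf hc hm hA
  constructor
  · exact ⟨fun ⟨_, hprop⟩ _ _ _ hc => hatMapsIntoX_of_isCompact_relImage hprop hc,
      fun hb => ⟨hf, proper_of_some ⟨Xh₀, t₀, j₀, hc₀, hb Xh₀ t₀ j₀ hc₀⟩⟩⟩
  · exact ⟨fun hb => ⟨Xh₀, t₀, j₀, hc₀, hb Xh₀ t₀ j₀ hc₀⟩,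
      fun hc _ _ _ hc' => hatMapsIntoX_of_isCompact_relImage (proper_of_some hc) hc'⟩

/-- For a closed relation `f` on a locally compact, σ-compact Hausdorff
space `X`, the following are equivalent: (a) `f` is +proper; (b) for every proper
compactification `(Xh, j)` of `X`, the closure `f̂` of `(j × j)(f)` satisfies
`f̂(j(X)) ⊆ j(X)`; (c) some proper compactification has this property. -/
theorem plusProper_iff_invariant_compactifications
    {X : Type u} [TopologicalSpace X] [LocallyCompactSpace X]
    [SigmaCompactSpace X] [T2Space X]
    (f : Set (X × X)) (hf : IsClosed f) :
    ((IsClosed f ∧ ∀ A : Set X, IsCompact A → IsCompact (relImage f A)) ↔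
      (∀ (Xh : Type u) (t : TopologicalSpace Xh) (j : X → Xh),
        @IsProperCompactification X _ Xh t j → @HatMapsIntoX X _ f Xh t j)) ∧
    ((∀ (Xh : Type u) (t : TopologicalSpace Xh) (j : X → Xh),
        @IsProperCompactification X _ Xh t j → @HatMapsIntoX X _ f Xh t j) ↔
      (∃ (Xh : Type u) (t : TopologicalSpace Xh) (j : X → Xh),
        @IsProperCompactification X _ Xh t j ∧ @HatMapsIntoX X _ f Xh t j)) :=
  plusProper_iff_invariant_compactifications_general f hf
end

section
/- Let X be a compact Hausdorff space, X₀ ⊆ X a closed subset, F a closed transitive relation on X, and F₀ = F ∩ (X₀ × X₀). Let a ≤ b be real numbers and let L₀ : X₀ → [a,b] be a continuous function such that (x,y) ∈ F₀ implies L₀(x) ≤ L₀(y). Then there exists a continuous function L : X → [a,b] extending L₀ (L restricted to X₀ equals L₀) such that (x,y) ∈ F implies L(x) ≤ L(y). -/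
/-! Let `≤` be the reflexive closure of `F`, a closed preorder on the compact space `X`. The
upper closure of a closed set is then closed (it is a projection of a closed subset of
`X × X`), which gives an ordered form of normality and, through the Urysohn construction,
monotone Urysohn functions. Adding up such functions for the levels `a + kε` yields a continuous
monotone function within `ε` of any band `ψ ≤ φ` with `ψ` monotone and upper semicontinuous and
`φ` lower semicontinuous; refining it in bands that shrink geometrically converges uniformly to a
continuous monotone `L` with `ψ ≤ L ≤ φ`. For `ψ x = max(a, sup {L₀ z | z ≤ x})` and
`φ x = min(b, inf {L₀ z | x ≤ z})`, both suprema attained by compactness of `X₀`, monotonicity of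
`L₀` makes `ψ = L₀ = φ` on `X₀`, so `L` extends `L₀`. -/

open Set Filter Topology

theorem floor_le_sum_range_of_eq_one {u : ℕ → ℝ} {t : ℝ} {n : ℕ} (hu : ∀ k, 0 ≤ u k)
    (hu1 : ∀ k : ℕ, k + 1 ≤ t → u k = 1) (hn : ⌊t⌋₊ ≤ n) :
    (⌊t⌋₊ : ℝ) ≤ ∑ k ∈ Finset.range n, u k := calc
  (⌊t⌋₊ : ℝ) = ∑ k ∈ Finset.range ⌊t⌋₊, u k := by
    rw [Finset.sum_congr rfl fun k hk => hu1 k ?_]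
    · simp
    · exact_mod_cast (Nat.le_floor_iff' k.succ_ne_zero).1 (Finset.mem_range.1 hk)
  _ ≤ ∑ k ∈ Finset.range n, u k :=
    Finset.sum_le_sum_of_subset_of_nonneg (Finset.range_subset_range.2 hn) fun k _ _ => hu k

theorem sum_range_le_ceil_of_eq_zero {u : ℕ → ℝ} {t : ℝ} (n : ℕ) (hu : ∀ k, u k ≤ 1)
    (hu0 : ∀ k : ℕ, t ≤ k → u k = 0) : ∑ k ∈ Finset.range n, u k ≤ ⌈t⌉₊ := calc
  ∑ k ∈ Finset.range n, u k = ∑ k ∈ Finset.range (min n ⌈t⌉₊), u k := by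
    refine (Finset.sum_subset (Finset.range_subset_range.2 (min_le_left _ _))
      fun k hk hk' => ?_).symm
    simp only [Finset.mem_range, lt_min_iff, not_and_or, not_lt] at hk hk'
    exact hu0 k (Nat.ceil_le.1 (hk'.resolve_left hk.not_ge))
  _ ≤ ∑ k ∈ Finset.range (min n ⌈t⌉₊), 1 := Finset.sum_le_sum fun k _ => hu k
  _ ≤ ⌈t⌉₊ := by simp

section CompactOrdered

variable {α : Type*} [TopologicalSpace α] [Preorder α]

namespace Urysohns.CU

variable {P : Set α → Set α → Prop} (hP : ∀ C U, P C U → IsLowerSet U)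
include hP

theorem monotone_approx (n : ℕ) (c : CU P) : Monotone (c.approx n) := by
  induction n generalizing c with
  | zero =>
    intro x y hxy
    by_cases hx : x ∈ c.Uᶜ
    · simp [approx, indicator_of_mem hx, indicator_of_mem ((hP _ _ c.P_C_U).compl hxy hx)]
    · simp only [approx, indicator_of_notMem hx]
      exact indicator_nonneg (fun _ _ => zero_le_one) _
  | succ n ih =>
    intro x y hxy
    exact midpoint_le_midpoint (ih c.left hxy) (ih c.right hxy)

theorem monotone_lim (c : CU P) : Monotone c.lim := fun _ y hxy =>
  ciSup_mono (c.bddAbove_range_approx y) fun n => monotone_approx hP n c hxy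

end Urysohns.CU

variable [OrderClosedTopology α] [CompactSpace α]

theorem IsClosed.upperClosure_of_compactSpace {s : Set α} (hs : IsClosed s) :
    IsClosed (upperClosure s : Set α) := by
  have : (upperClosure s : Set α) = Prod.snd '' (s ×ˢ univ ∩ {p | p.1 ≤ p.2}) := by
    ext y
    simp [and_assoc]
  rw [this]
  exact isClosedMap_snd_of_compactSpace _ ((hs.prod isClosed_univ).inter isClosed_le_prod)

theorem IsClosed.lowerClosure_of_compactSpace {s : Set α} (hs : IsClosed s) :
    IsClosed (lowerClosure s : Set α) :=
  have : CompactSpace αᵒᵈ := ‹CompactSpace α›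
  IsClosed.upperClosure_of_compactSpace (α := αᵒᵈ) hs

theorem exists_isOpen_isLowerSet_isUpperSet_separating {s t : Set α} (hs : IsClosed s)
    (hs' : IsLowerSet s) (ht : IsClosed t) (ht' : IsUpperSet t) (hst : Disjoint s t) :
    ∃ u v : Set α, IsOpen u ∧ IsLowerSet u ∧ IsOpen v ∧ IsUpperSet v ∧
      s ⊆ u ∧ t ⊆ v ∧ Disjoint u v := by
  have hts : t ×ˢ s ⊆ {p | p.1 ≤ p.2}ᶜ := fun p ⟨hpt, hps⟩ hle =>
    hst.notMem_of_mem_left (hs' hle hps) hpt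
  obtain ⟨v', u', hv', hu', htv', hsu', hvu'⟩ :=
    generalized_tube_lemma ht.isCompact hs.isCompact isClosed_le_prod.isOpen_compl hts
  refine ⟨(upperClosure u'ᶜ : Set α)ᶜ, (lowerClosure v'ᶜ : Set α)ᶜ,
    (hu'.isClosed_compl.upperClosure_of_compactSpace).isOpen_compl,
    (upperClosure u'ᶜ).upper.compl,
    (hv'.isClosed_compl.lowerClosure_of_compactSpace).isOpen_compl,
    (lowerClosure v'ᶜ).lower.compl, ?_, ?_, ?_⟩
  · rintro x hx ⟨y, hy, hyx⟩
    exact hy (hsu' (hs' hyx hx))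
  · rintro x hx ⟨y, hy, hxy⟩
    exact hy (htv' (ht' hxy hx))
  · refine disjoint_left.2 fun x hxu hxv => ?_
    have hxu' : x ∈ u' := not_not.1 fun h => hxu (subset_upperClosure h)
    have hxv' : x ∈ v' := not_not.1 fun h => hxv (subset_lowerClosure h)
    exact hvu' (mk_mem_prod hxv' hxu') le_rfl

theorem exists_continuous_monotone_zero_one_of_isClosed {s t : Set α} (hs : IsClosed s)
    (ht : IsClosed t) (ht' : IsUpperSet t) (hst : Disjoint s t) :
    ∃ f : C(α, ℝ), Monotone f ∧ EqOn f 0 s ∧ EqOn f 1 t ∧ ∀ x, f x ∈ Icc (0 : ℝ) 1 := by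
  -- `C` itself need not be a lower set (the closure of an open lower set may fail to be one),
  -- so the invariant is kept for its lower closure
  let P : Set α → Set α → Prop := fun C U => IsLowerSet U ∧ (lowerClosure C : Set α) ⊆ U
  let c : Urysohns.CU P :=
  { C := s
    U := tᶜ
    P_C_U := ⟨ht'.compl, lowerClosure_min (disjoint_left.1 hst) ht'.compl⟩
    closed_C := hs
    open_U := ht.isOpen_compl
    subset := disjoint_left.1 hst
    hP := by
      rintro c u hc ⟨hu, hcu⟩ u_open -
      obtain ⟨v, w, hv, hv', hw, hw', hcv, huw, hvw⟩ :=
        exists_isOpen_isLowerSet_isUpperSet_separating hc.lowerClosure_of_compactSpace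
          (lowerClosure c).lower u_open.isClosed_compl hu.compl
          (disjoint_compl_right_iff_subset.2 hcu)
      have hvw : closure v ⊆ wᶜ :=
        closure_minimal (subset_compl_iff_disjoint_right.2 hvw) hw.isClosed_compl
      have hwu : wᶜ ⊆ u := compl_subset_comm.1 huw
      exact ⟨v, hv, subset_lowerClosure.trans hcv, hvw.trans hwu, ⟨hv', hcv⟩, hu,
        (lowerClosure_min hvw hw'.compl).trans hwu⟩ }
  exact ⟨⟨c.lim, c.continuous_lim⟩, c.monotone_lim fun _ _ h => h.1, c.lim_of_mem_C,
    fun x hx => c.lim_of_notMem_U _ fun h => h hx, c.lim_mem_Icc⟩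

theorem exists_continuous_monotone_near_between {ψ φ : α → ℝ} (hψ : UpperSemicontinuous ψ)
    (hφ : LowerSemicontinuous φ) (hψm : Monotone ψ) (hψφ : ψ ≤ φ) {ε : ℝ} (hε : 0 < ε) :
    ∃ g : C(α, ℝ), Monotone g ∧ ∀ x, g x ∈ Icc (ψ x - ε) (φ x + ε) := by
  obtain ⟨a, ha⟩ := (hφ.lowerSemicontinuousOn univ).bddBelow_of_isCompact isCompact_univ
  obtain ⟨b, hb⟩ := (hψ.upperSemicontinuousOn univ).bddAbove_of_isCompact isCompact_univ
  have hsep : ∀ k : ℕ, ∃ u : C(α, ℝ), Monotone u ∧ EqOn u 0 {x | φ x ≤ a + k * ε} ∧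
      EqOn u 1 {x | a + (k + 1) * ε ≤ ψ x} ∧ ∀ x, u x ∈ Icc (0 : ℝ) 1 := fun k =>
    exists_continuous_monotone_zero_one_of_isClosed (hφ.isClosed_preimage _)
      (hψ.isClosed_preimage _) (fun x y hxy hx => hx.trans (hψm hxy))
      (disjoint_left.2 fun x hx hx' => by
        have : a + (k + 1) * ε ≤ a + k * ε := hx'.trans ((hψφ x).trans hx)
        linarith)
  choose u hum hu0 hu1 hu01 using hsep
  set n := ⌈(b - a) / ε⌉₊
  refine ⟨⟨fun x => a + ε * ∑ k ∈ Finset.range n, u k x, by fun_prop⟩, ?_, fun x => ⟨?_, ?_⟩⟩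
  · intro x y hxy
    have := Finset.sum_le_sum fun k (_ : k ∈ Finset.range n) => hum k hxy
    dsimp only [ContinuousMap.coe_mk]
    gcongr
  · set t := (ψ x - a) / ε
    have hmn : ⌊t⌋₊ ≤ n := (Nat.floor_le_floor (div_le_div_of_nonneg_right
      (sub_le_sub_right (hb ⟨x, trivial, rfl⟩) a) hε.le)).trans (Nat.floor_le_ceil _)
    have hsum := floor_le_sum_range_of_eq_one (fun k => (hu01 k x).1) (fun k hk => hu1 k <|
      show a + (k + 1) * ε ≤ ψ x by rw [le_div_iff₀ hε] at hk; linarith) hmn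
    have := Nat.lt_floor_add_one t
    rw [div_lt_iff₀ hε] at this
    dsimp only [ContinuousMap.coe_mk]
    nlinarith
  · set t := (φ x - a) / ε
    have hsum := sum_range_le_ceil_of_eq_zero (t := t) n (fun k => (hu01 k x).2)
      (fun k hk => hu0 k <| show φ x ≤ a + k * ε by rw [div_le_iff₀ hε] at hk; linarith)
    have := Nat.ceil_lt_add_one (div_nonneg (sub_nonneg.2 (ha ⟨x, trivial, rfl⟩)) hε.le)
    rw [← sub_lt_iff_lt_add, lt_div_iff₀ hε] at this
    dsimp only [ContinuousMap.coe_mk]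
    nlinarith

theorem exists_continuous_monotone_near_between_of_near {ψ φ : α → ℝ}
    (hψ : UpperSemicontinuous ψ) (hφ : LowerSemicontinuous φ) (hψm : Monotone ψ) (hψφ : ψ ≤ φ)
    {ε δ : ℝ} (hε : 0 ≤ ε) (hδ : 0 < δ) {g : C(α, ℝ)} (hgm : Monotone g)
    (hg : ∀ x, g x ∈ Icc (ψ x - ε) (φ x + ε)) :
    ∃ g' : C(α, ℝ), Monotone g' ∧ (∀ x, g' x ∈ Icc (ψ x - δ) (φ x + δ)) ∧ dist g' g ≤ ε + δ := by
  -- narrowing the band to the `ε`-neighbourhood of `g` keeps `g'` close to `g`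
  obtain ⟨g', hg'm, hg'⟩ := exists_continuous_monotone_near_between
    (ψ := fun x => ψ x ⊔ (g x - ε)) (φ := fun x => φ x ⊓ (g x + ε))
    (hψ.sup (by fun_prop : Continuous fun x => g x - ε).upperSemicontinuous)
    (hφ.inf (by fun_prop : Continuous fun x => g x + ε).lowerSemicontinuous)
    (fun x y hxy => sup_le_sup (hψm hxy) (by linarith [hgm hxy]))
    (fun x => sup_le (le_inf (hψφ x) (by linarith [(hg x).1]))
      (le_inf (by linarith [(hg x).2]) (by linarith)))
    hδ
  refine ⟨g', hg'm, fun x => ⟨?_, ?_⟩, (ContinuousMap.dist_le (add_nonneg hε hδ.le)).2 fun x => ?_⟩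
  · linarith [(hg' x).1, le_sup_left (a := ψ x) (b := g x - ε)]
  · linarith [(hg' x).2, inf_le_left (a := φ x) (b := g x + ε)]
  · rw [Real.dist_eq, abs_sub_le_iff]
    constructor
    · linarith [(hg' x).2, inf_le_right (a := φ x) (b := g x + ε)]
    · linarith [(hg' x).1, le_sup_right (a := ψ x) (b := g x - ε)]

theorem exists_continuous_monotone_between {ψ φ : α → ℝ} (hψ : UpperSemicontinuous ψ)
    (hφ : LowerSemicontinuous φ) (hψm : Monotone ψ) (hψφ : ψ ≤ φ) :
    ∃ f : C(α, ℝ), Monotone f ∧ ∀ x, f x ∈ Icc (ψ x) (φ x) := by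
  let S : ℕ → Set C(α, ℝ) := fun n =>
    {g | Monotone g ∧ ∀ x, g x ∈ Icc (ψ x - (1 / 2) ^ n) (φ x + (1 / 2) ^ n)}
  obtain ⟨g₀, hg₀⟩ : (S 0).Nonempty :=
    exists_continuous_monotone_near_between hψ hφ hψm hψφ (by norm_num)
  have step : ∀ n, ∀ g ∈ S n, ∃ g' ∈ S (n + 1), dist g' g ≤ 3 / 2 * (1 / 2) ^ n := by
    rintro n g ⟨hgm, hg⟩
    obtain ⟨g', hg'm, hg', hdist⟩ := exists_continuous_monotone_near_between_of_near hψ hφ hψm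
      hψφ (δ := (1 / 2) ^ (n + 1)) (by positivity) (by positivity) hgm hg
    exact ⟨g', ⟨hg'm, hg'⟩, hdist.trans_eq (by ring)⟩
  choose! next hnext hdist using step
  let g : ℕ → C(α, ℝ) := fun n => Nat.rec g₀ next n
  have hg : ∀ n, g n ∈ S n := fun n => Nat.rec hg₀ (fun n h => hnext n _ h) n
  obtain ⟨f, hf⟩ := cauchySeq_tendsto_of_complete <| cauchySeq_of_le_geometric (f := g)
    (1 / 2) (3 / 2) (by norm_num) fun n => (dist_comm _ _).trans_le (hdist n _ (hg n))
  have hfx : ∀ x, Tendsto (fun n => g n x) atTop (𝓝 (f x)) := fun x =>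
    ((continuous_eval_const x).tendsto f).comp hf
  have hε : Tendsto (fun n : ℕ => (1 / 2 : ℝ) ^ n) atTop (𝓝 0) :=
    tendsto_pow_atTop_nhds_zero_of_lt_one (by norm_num) (by norm_num)
  refine ⟨f, fun x y hxy => le_of_tendsto_of_tendsto' (hfx x) (hfx y) fun n => (hg n).1 hxy,
    fun x => ⟨?_, ?_⟩⟩
  · have := (hfx x).add hε
    rw [add_zero] at this
    exact ge_of_tendsto' this fun n => by linarith [((hg n).2 x).1]
  · have := (hfx x).sub hε
    rw [sub_zero] at this
    exact le_of_tendsto' this fun n => by linarith [((hg n).2 x).2]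

end CompactOrdered

section MonotoneEnvelope

variable {α : Type*} [Preorder α] {s : Set α}

noncomputable def lowerMonotoneEnvelope (a : ℝ) (f : s → ℝ) (x : α) : ℝ :=
  sSup (insert a (f '' {z | (z : α) ≤ x}))

noncomputable def upperMonotoneEnvelope (b : ℝ) (f : s → ℝ) (x : α) : ℝ :=
  sInf (insert b (f '' {z | x ≤ (z : α)}))

variable [TopologicalSpace α] [OrderClosedTopology α] [CompactSpace α] (hs : IsClosed s)
  {f : s → ℝ} (hf : Continuous f) {a b : ℝ}
include hs hf

theorem le_lowerMonotoneEnvelope_iff {c : ℝ} {x : α} :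
    c ≤ lowerMonotoneEnvelope a f x ↔ c ≤ a ∨ ∃ z : s, (z : α) ≤ x ∧ c ≤ f z := by
  have hK : IsCompact (insert a (f '' {z | (z : α) ≤ x})) :=
    ((hs.isClosedEmbedding_subtypeVal.isCompact_preimage isClosed_Iic.isCompact).image hf).insert a
  constructor
  · intro h
    rcases hK.sSup_mem (insert_nonempty _ _) with h' | ⟨z, hz, h'⟩
    · exact Or.inl (h.trans_eq h')
    · exact Or.inr ⟨z, hz, h.trans_eq h'.symm⟩
  · rintro (h | ⟨z, hz, h⟩)
    · exact h.trans (le_csSup hK.bddAbove (mem_insert _ _))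
    · exact h.trans (le_csSup hK.bddAbove (mem_insert_of_mem _ ⟨z, hz, rfl⟩))

theorem upperMonotoneEnvelope_le_iff {c : ℝ} {x : α} :
    upperMonotoneEnvelope b f x ≤ c ↔ b ≤ c ∨ ∃ z : s, x ≤ (z : α) ∧ f z ≤ c := by
  have hK : IsCompact (insert b (f '' {z | x ≤ (z : α)})) :=
    ((hs.isClosedEmbedding_subtypeVal.isCompact_preimage isClosed_Ici.isCompact).image hf).insert b
  constructor
  · intro h
    rcases hK.sInf_mem (insert_nonempty _ _) with h' | ⟨z, hz, h'⟩
    · exact Or.inl (h'.symm.trans_le h)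
    · exact Or.inr ⟨z, hz, h'.trans_le h⟩
  · rintro (h | ⟨z, hz, h⟩)
    · exact (csInf_le hK.bddBelow (mem_insert _ _)).trans h
    · exact (csInf_le hK.bddBelow (mem_insert_of_mem _ ⟨z, hz, rfl⟩)).trans h

theorem le_lowerMonotoneEnvelope (x : α) : a ≤ lowerMonotoneEnvelope a f x :=
  (le_lowerMonotoneEnvelope_iff hs hf).2 (Or.inl le_rfl)

theorem upperMonotoneEnvelope_le (x : α) : upperMonotoneEnvelope b f x ≤ b :=
  (upperMonotoneEnvelope_le_iff hs hf).2 (Or.inl le_rfl)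

theorem monotone_lowerMonotoneEnvelope : Monotone (lowerMonotoneEnvelope a f) := by
  intro x y hxy
  rcases (le_lowerMonotoneEnvelope_iff hs hf).1 le_rfl with h | ⟨z, hz, h⟩
  · exact (le_lowerMonotoneEnvelope_iff hs hf).2 (Or.inl h)
  · exact (le_lowerMonotoneEnvelope_iff hs hf).2 (Or.inr ⟨z, hz.trans hxy, h⟩)

theorem upperSemicontinuous_lowerMonotoneEnvelope :
    UpperSemicontinuous (lowerMonotoneEnvelope a f) := by
  refine upperSemicontinuous_iff_isClosed_preimage.2 fun c => ?_
  have : lowerMonotoneEnvelope a f ⁻¹' Ici c =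
      {_x | c ≤ a} ∪ upperClosure (Subtype.val '' {z | c ≤ f z}) := by
    ext x
    simp [le_lowerMonotoneEnvelope_iff hs hf, and_comm]
  rw [this]
  exact isClosed_const.union (hs.isClosedEmbedding_subtypeVal.isClosedMap _
    (isClosed_le continuous_const hf)).upperClosure_of_compactSpace

theorem lowerSemicontinuous_upperMonotoneEnvelope :
    LowerSemicontinuous (upperMonotoneEnvelope b f) := by
  refine lowerSemicontinuous_iff_isClosed_preimage.2 fun c => ?_
  have : upperMonotoneEnvelope b f ⁻¹' Iic c =
      {_x | b ≤ c} ∪ lowerClosure (Subtype.val '' {z | f z ≤ c}) := by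
    ext x
    simp [upperMonotoneEnvelope_le_iff hs hf, and_comm]
  rw [this]
  exact isClosed_const.union (hs.isClosedEmbedding_subtypeVal.isClosedMap _
    (isClosed_le hf continuous_const)).lowerClosure_of_compactSpace

variable (hfm : Monotone f) (hfab : ∀ z, f z ∈ Icc a b)
include hfm hfab

theorem lowerMonotoneEnvelope_coe (z : s) : lowerMonotoneEnvelope a f z = f z := by
  refine le_antisymm ?_ ((le_lowerMonotoneEnvelope_iff hs hf).2 (Or.inr ⟨z, le_rfl, le_rfl⟩))
  rcases (le_lowerMonotoneEnvelope_iff hs hf).1 le_rfl with h | ⟨w, hw, h⟩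
  · exact h.trans (hfab z).1
  · exact h.trans (hfm hw)

theorem upperMonotoneEnvelope_coe (z : s) : upperMonotoneEnvelope b f z = f z := by
  refine le_antisymm ((upperMonotoneEnvelope_le_iff hs hf).2 (Or.inr ⟨z, le_rfl, le_rfl⟩)) ?_
  rcases (upperMonotoneEnvelope_le_iff hs hf).1 le_rfl with h | ⟨w, hw, h⟩
  · exact (hfab z).2.trans h
  · exact (hfm hw).trans h

theorem lowerMonotoneEnvelope_le_upperMonotoneEnvelope (hab : a ≤ b) (x : α) :
    lowerMonotoneEnvelope a f x ≤ upperMonotoneEnvelope b f x := by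
  rcases (le_lowerMonotoneEnvelope_iff hs hf (a := a) (x := x)).1 le_rfl with h | ⟨z, hz, h⟩ <;>
    rcases (upperMonotoneEnvelope_le_iff hs hf (b := b) (x := x)).1 le_rfl with h' | ⟨w, hw, h'⟩
  · linarith
  · linarith [(hfab w).1]
  · linarith [(hfab z).2]
  · linarith [hfm (show z ≤ w from hz.trans hw)]

end MonotoneEnvelope

theorem exists_continuous_monotone_extension {α : Type*} [TopologicalSpace α] [Preorder α]
    [OrderClosedTopology α] [CompactSpace α] {s : Set α} (hs : IsClosed s) {f : s → ℝ}
    (hf : Continuous f) (hfm : Monotone f) {a b : ℝ} (hab : a ≤ b) (hfab : ∀ z, f z ∈ Icc a b) :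
    ∃ g : C(α, ℝ), Monotone g ∧ (∀ x, g x ∈ Icc a b) ∧ ∀ z : s, g z = f z := by
  obtain ⟨g, hgm, hg⟩ := exists_continuous_monotone_between
    (upperSemicontinuous_lowerMonotoneEnvelope hs hf)
    (lowerSemicontinuous_upperMonotoneEnvelope hs hf)
    (monotone_lowerMonotoneEnvelope hs hf)
    (lowerMonotoneEnvelope_le_upperMonotoneEnvelope hs hf hfm hfab hab)
  refine ⟨g, hgm, fun x => ⟨(le_lowerMonotoneEnvelope hs hf x).trans (hg x).1,
    (hg x).2.trans (upperMonotoneEnvelope_le hs hf x)⟩, fun z => le_antisymm ?_ ?_⟩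
  · simpa only [upperMonotoneEnvelope_coe hs hf hfm hfab] using (hg z).2
  · simpa only [lowerMonotoneEnvelope_coe hs hf hfm hfab] using (hg z).1

abbrev RelTrans.reflPreorder {X : Type*} {F : Set (X × X)} (hF : RelTrans F) : Preorder X where
  le x y := (x, y) ∈ F ∨ x = y
  le_refl _ := Or.inr rfl
  le_trans x y z := by
    rintro (hxy | rfl) (hyz | rfl)
    exacts [Or.inl (hF x y z hxy hyz), Or.inl hxy, Or.inl hyz, Or.inr rfl]

/-- Nachbin extension theorem: Let `X` be compact Hausdorff, `X₀ ⊆ X`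
closed, `F` a closed transitive relation on `X` with restriction `F₀ = F ∩ (X₀ × X₀)`,
and `L₀ : X₀ → [a,b]` a continuous Lyapunov function for `F₀`.  Then `L₀` extends to a
continuous Lyapunov function `L : X → [a,b]` for `F`. -/
theorem lyapunov_extension
    {X : Type*} [TopologicalSpace X] [CompactSpace X] [T2Space X]
    (X₀ : Set X) (hX₀ : IsClosed X₀)
    (F : Set (X × X)) (hF : IsClosed F) (hFt : RelTrans F)
    (a b : ℝ) (hab : a ≤ b)
    (L₀ : X₀ → ℝ) (hL₀c : Continuous L₀)
    (hL₀ab : ∀ z : X₀, L₀ z ∈ Set.Icc a b)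
    (hL₀m : ∀ x y : X₀, ((x : X), (y : X)) ∈ F → L₀ x ≤ L₀ y) :
    ∃ L : X → ℝ, Continuous L ∧ (∀ x : X, L x ∈ Set.Icc a b) ∧
      (∀ z : X₀, L z = L₀ z) ∧ (∀ x y : X, (x, y) ∈ F → L x ≤ L y) := by
  let : Preorder X := hFt.reflPreorder
  have : OrderClosedTopology X := ⟨hF.union (isClosed_eq continuous_fst continuous_snd)⟩
  obtain ⟨L, hLm, hLab, hLext⟩ := exists_continuous_monotone_extension hX₀ hL₀c
    (fun x y (hxy : ((x : X), (y : X)) ∈ F ∨ (x : X) = y) =>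
      hxy.elim (hL₀m x y) fun h => (congrArg L₀ (Subtype.ext h)).le) hab hL₀ab
  exact ⟨L, L.continuous, hLab, hLext, fun x y hxy => hLm (Or.inl hxy)⟩
end

section
/- Let F be a closed transitive relation on a locally compact, σ-compact Hausdorff space X. Let A ⊆ X be a compact set with F(A) ⊆ A, and assume A admits a compact neighborhood U (A is contained in the interior of U) such that F(U) is compact. Then there exists a continuous function L : X → [0,1] with compact support such that (x,y) ∈ F implies L(x) ≤ L(y) and L(x) = 1 for all x ∈ A. -/
/-
Run Urysohn's construction with every open set forward invariant. The insertion step this needs: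
if `V ⊆ S` is compact, `W = interior V` and `F(S)` is compact, then `{x ∈ W | F(x) ⊆ W}` is open
(its complement in `W` is the projection of the compact set `F ∩ V × (F(S) \ W)`), forward
invariant by transitivity, and contains every `K` with `K ∪ F(K) ⊆ W`. The resulting Urysohn
function `f` is a limit of averages of indicators of complements of forward-invariant sets, hence
decreases along `F`; it vanishes on `A` and equals `1` outside a
forward-invariant open set with compact closure, so `L = 1 - f` works.
-/

open Set

section

variable {X : Type*} [TopologicalSpace X]

theorem isCompact_relImage_of_subset [T2Space X] {F : Set (X × X)} (hF : IsClosed F)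
    {K S : Set X} (hK : IsCompact K) (hS : IsCompact (relImage F S)) (hKS : K ⊆ S) :
    IsCompact (relImage F K) := by
  have : relImage F K = Prod.snd '' (F ∩ K ×ˢ relImage F S) := by
    ext y
    constructor
    · rintro ⟨x, hx, hxy⟩
      exact ⟨(x, y), ⟨hxy, hx, x, hKS hx, hxy⟩, rfl⟩
    · rintro ⟨⟨x, y⟩, ⟨hxy, hx, -⟩, rfl⟩
      exact ⟨x, hx, hxy⟩
  rw [this]
  exact ((hK.prod hS).inter_left hF).image continuous_snd

theorem exists_isOpen_relImage_subset_between [T2Space X] [LocallyCompactSpace X]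
    {F : Set (X × X)} (hF : IsClosed F) (hFt : RelTrans F) {S K u : Set X}
    (hS : IsCompact (relImage F S)) (hK : IsCompact K) (hu : IsOpen u) (huS : u ⊆ S)
    (hKu : K ⊆ u) (hFKu : relImage F K ⊆ u) :
    ∃ v, IsOpen v ∧ K ⊆ v ∧ closure v ⊆ u ∧ IsCompact (closure v) ∧ relImage F v ⊆ v := by
  obtain ⟨V, hV, hKV, hVu⟩ := exists_compact_between
    (hK.union (isCompact_relImage_of_subset hF hK hS (hKu.trans huS))) hu (union_subset hKu hFKu)
  set W := interior V
  set escape := Prod.fst '' (F ∩ V ×ˢ (relImage F S \ W))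
  have mem_escape {x y : X} (hx : x ∈ V) (hxy : (x, y) ∈ F) (hy : y ∉ W) : x ∈ escape :=
    ⟨(x, y), ⟨hxy, hx, ⟨x, huS (hVu hx), hxy⟩, hy⟩, rfl⟩
  have hescape : IsClosed escape :=
    (((hV.prod (hS.diff isOpen_interior)).inter_left hF).image continuous_fst).isClosed
  have hclosure : closure (W \ escape) ⊆ V :=
    (closure_mono (sdiff_subset.trans interior_subset)).trans hV.isClosed.closure_subset
  refine ⟨W \ escape, isOpen_interior.sdiff hescape, ?_, hclosure.trans hVu,
    hV.of_isClosed_subset isClosed_closure hclosure, ?_⟩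
  · intro x hx
    refine ⟨hKV (Or.inl hx), ?_⟩
    rintro ⟨⟨x, y⟩, ⟨hxy, -, -, hy⟩, rfl⟩
    exact hy (hKV (Or.inr ⟨x, hx, hxy⟩))
  · rintro y ⟨x, ⟨hxW, hx⟩, hxy⟩
    have hxV : x ∈ V := interior_subset hxW
    have hyW : y ∈ W := by_contra fun hy => hx (mem_escape hxV hxy hy)
    refine ⟨hyW, ?_⟩
    rintro ⟨⟨y, z⟩, ⟨hyz, -, -, hz⟩, rfl⟩
    exact hx (mem_escape hxV (hFt _ _ z hxy hyz) hz)

namespace Urysohns.CU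

variable {P : Set X → Set X → Prop} {F : Set (X × X)}

theorem approx_le_approx_of_mem (hPF : ∀ {C V}, P C V → relImage F V ⊆ V) (c : CU P) (n : ℕ)
    {x y : X} (hxy : (x, y) ∈ F) : c.approx n y ≤ c.approx n x := by
  induction n generalizing c with
  | zero =>
    by_cases hx : x ∈ c.U
    · have hy : y ∈ c.U := hPF c.P_C_U ⟨x, hx, hxy⟩
      simp [approx, hx, hy]
    · exact (c.approx_le_one 0 y).trans (c.approx_of_notMem_U 0 hx).ge
  | succ n ih => exact midpoint_le_midpoint (ih c.left) (ih c.right)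

theorem lim_le_lim_of_mem (hPF : ∀ {C V}, P C V → relImage F V ⊆ V) (c : CU P)
    {x y : X} (hxy : (x, y) ∈ F) : c.lim y ≤ c.lim x :=
  ciSup_mono (c.bddAbove_range_approx x) fun n => c.approx_le_approx_of_mem hPF n hxy

end Urysohns.CU

theorem exists_continuous_zero_one_of_relImage_subset [T2Space X] [LocallyCompactSpace X]
    {F : Set (X × X)} (hF : IsClosed F) (hFt : RelTrans F) {S K u : Set X}
    (hS : IsCompact (relImage F S)) (hK : IsCompact K) (hu : IsOpen u) (huS : u ⊆ S)
    (hKu : K ⊆ u) (hFu : relImage F u ⊆ u) :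
    ∃ f : X → ℝ, Continuous f ∧ EqOn f 0 K ∧ EqOn f 1 uᶜ ∧ (∀ x, f x ∈ Icc (0 : ℝ) 1) ∧
      ∀ x y, (x, y) ∈ F → f y ≤ f x := by
  let P (C V : Set X) : Prop := IsCompact C ∧ relImage F V ⊆ V ∧ V ⊆ S
  let c : Urysohns.CU P :=
    { C := K, U := u, P_C_U := ⟨hK, hFu, huS⟩, closed_C := hK.isClosed, open_U := hu,
      subset := hKu
      hP := fun {C V} _ ⟨hC, hFV, hVS⟩ hV hCV => by
        obtain ⟨w, hw, hCw, hwV, hw_compact, hFw⟩ := exists_isOpen_relImage_subset_between hF hFt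
          hS hC hV hVS hCV (fun y ⟨x, hx, hxy⟩ => hFV ⟨x, hCV hx, hxy⟩)
        exact ⟨w, hw, hCw, hwV, ⟨hC, hFw, subset_closure.trans (hwV.trans hVS)⟩,
          ⟨hw_compact, hFV, hVS⟩⟩ }
  exact ⟨c.lim, c.continuous_lim, c.lim_of_mem_C, c.lim_of_notMem_U, c.lim_mem_Icc,
    fun x y => c.lim_le_lim_of_mem fun hP => hP.2.1⟩

end

theorem lyapunov_compactSupport_general
    {X : Type*} [TopologicalSpace X] [LocallyCompactSpace X] [T2Space X]
    (F : Set (X × X)) (hF : IsClosed F) (hFt : RelTrans F)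
    (A : Set X) (hA : IsCompact A) (hAinv : relImage F A ⊆ A)
    (U : Set X) (hAU : A ⊆ interior U)
    (hFU : IsCompact (relImage F U)) :
    ∃ L : X → ℝ, Continuous L ∧ HasCompactSupport L ∧
      (∀ x : X, L x ∈ Set.Icc (0:ℝ) 1) ∧
      (∀ x y : X, (x, y) ∈ F → L x ≤ L y) ∧
      (∀ x ∈ A, L x = 1) := by
  obtain ⟨v, hv, hAv, hvU, hv_compact, hFv⟩ := exists_isOpen_relImage_subset_between hF hFt hFU hA
    isOpen_interior interior_subset hAU (hAinv.trans hAU)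
  obtain ⟨f, hf, hfA, hfv, hf01, hfF⟩ := exists_continuous_zero_one_of_relImage_subset hF hFt hFU
    hA hv (subset_closure.trans (hvU.trans interior_subset)) hAv hFv
  refine ⟨fun x => 1 - f x, continuous_const.sub hf, ?_, fun x => ?_,
    fun x y hxy => sub_le_sub_left (hfF x y hxy) 1, fun x hx => by simp [hfA hx]⟩
  · refine HasCompactSupport.intro hv_compact fun x hx => ?_
    simp [hfv fun h => hx (subset_closure h)]
  · exact ⟨sub_nonneg.2 (hf01 x).2, sub_le_self 1 (hf01 x).1⟩

/-- Let `F` be a closed transitive relation on a locally compact,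
σ-compact Hausdorff space `X`, and `A` a compact `F`-+invariant set admitting a
compact neighborhood `U` with `F(U)` compact.  Then there is a continuous Lyapunov
function `L : X → [0,1]` for `F` with compact support and `L = 1` on `A`. -/
theorem lyapunov_compactSupport
    {X : Type*} [TopologicalSpace X] [LocallyCompactSpace X]
    [SigmaCompactSpace X] [T2Space X]
    (F : Set (X × X)) (hF : IsClosed F) (hFt : RelTrans F)
    (A : Set X) (hA : IsCompact A) (hAinv : relImage F A ⊆ A)
    (U : Set X) (hU : IsCompact U) (hAU : A ⊆ interior U)
    (hFU : IsCompact (relImage F U)) :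
    ∃ L : X → ℝ, Continuous L ∧ HasCompactSupport L ∧
      (∀ x : X, L x ∈ Set.Icc (0:ℝ) 1) ∧
      (∀ x y : X, (x, y) ∈ F → L x ≤ L y) ∧
      (∀ x ∈ A, L x = 1) :=
  lyapunov_compactSupport_general F hF hFt A hA hAinv U hAU hFU
end

section
/- Let F be a closed transitive relation on a locally compact, σ-compact Hausdorff space X. Let E ⊆ X be a compact set such that for some x₀ ∈ E one has (x₀,x₀) ∈ F and E = F(x₀) ∩ F⁻¹(x₀). Assume that for every neighborhood U of E the set F(U) ∩ F⁻¹(U) does not have compact closure. Then for every compact Hausdorff space X̂ containing X as a dense open subspace, with F̂ the closure of F in X̂ × X̂, there exist z ∈ X̂ ∖ X and a, b ∈ E such that (a,z) ∈ F̂ and (z,b) ∈ F̂. -/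
/-!
Consider the chains `a → y → b` of `F` in which `a` and `b` tend to `E` while `y` escapes
every compact subset of `X`. Unboundedness of `F(U) ∩ F⁻¹(U)` for every neighbourhood `U`
of `E` says exactly that such chains exist, so they form a proper filter on `X × X × X`.
Its image in the compact space `X̂³` has a cluster point `(a, z, b)`: then `a, b ∈ E` since
`E` is compact, `z ∉ X` since `X` is open and locally compact, and `(a, z), (z, b) ∈ F̂`.
-/

open Filter Topology Set

section Chains

variable {X : Type*} [TopologicalSpace X]

def escapingChains (F : Set (X × X)) (E : Set X) : Filter (X × X × X) :=
  (𝓝ˢ E ×ˢ cocompact X ×ˢ 𝓝ˢ E) ⊓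
    𝓟 {p | (p.1, p.2.1) ∈ F ∧ (p.2.1, p.2.2) ∈ F}

variable {F : Set (X × X)} {E : Set X}

theorem escapingChains_neBot [T2Space X]
    (hunbounded : ∀ U : Set X, E ⊆ interior U →
      ¬ IsCompact (closure (relImage F U ∩ relImage (relInv F) U))) :
    (escapingChains F E).NeBot := by
  refine inf_principal_neBot_iff.mpr fun t ht => ?_
  obtain ⟨U, hU, s, hs, hUs⟩ := mem_prod_iff.mp ht
  obtain ⟨L, hL, V, hV, hLV⟩ := mem_prod_iff.mp hs
  obtain ⟨K, hK, hKL⟩ := hasBasis_cocompact.mem_iff.mp hL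
  by_contra hempty
  have hsub : relImage F (U ∩ V) ∩ relImage (relInv F) (U ∩ V) ⊆ K := by
    rintro y ⟨⟨a, ha, hay⟩, b, hb, hyb⟩
    by_contra hyK
    exact hempty ⟨(a, y, b), hUs ⟨ha.1, hLV ⟨hKL hyK, hb.2⟩⟩, hay, hyb⟩
  exact hunbounded (U ∩ V) (subset_interior_iff_mem_nhdsSet.mpr (inter_mem hU hV))
    (hK.of_isClosed_subset isClosed_closure (closure_minimal hsub hK.isClosed))

theorem tendsto_fst_escapingChains :
    Tendsto Prod.fst (escapingChains F E) (𝓝ˢ E) :=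
  tendsto_fst.mono_left inf_le_left

theorem tendsto_snd_fst_escapingChains :
    Tendsto (fun p : X × X × X => p.2.1) (escapingChains F E) (cocompact X) :=
  (tendsto_fst.comp tendsto_snd).mono_left inf_le_left

theorem tendsto_snd_snd_escapingChains :
    Tendsto (fun p : X × X × X => p.2.2) (escapingChains F E) (𝓝ˢ E) :=
  (tendsto_snd.comp tendsto_snd).mono_left inf_le_left

theorem eventually_fst_mem_escapingChains :
    ∀ᶠ p in escapingChains F E, (p.1, p.2.1) ∈ F :=
  mem_inf_of_right (mem_principal.mpr fun _ hp => hp.1)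

theorem eventually_snd_mem_escapingChains :
    ∀ᶠ p in escapingChains F E, (p.2.1, p.2.2) ∈ F :=
  mem_inf_of_right (mem_principal.mpr fun _ hp => hp.2)

end Chains

section ClusterPoints

variable {X Y : Type*} [TopologicalSpace X] [TopologicalSpace Y] {j : X → Y} {y : Y}

theorem mem_image_of_mapClusterPt_nhdsSet [T2Space Y] (hj : Continuous j) {E : Set X}
    (hE : IsCompact E) (hy : MapClusterPt y (𝓝ˢ E) j) : y ∈ j '' E := by
  by_contra hyE
  have hle : map j (𝓝ˢ E) ≤ 𝓝ˢ (j '' E) := hj.tendsto_nhdsSet (mapsTo_image j E)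
  exact clusterPt_iff_not_disjoint.mp (hy.clusterPt.mono hle)
    ((hE.image hj).disjoint_nhdsSet_nhds hyE).symm

theorem notMem_range_of_mapClusterPt_cocompact [WeaklyLocallyCompactSpace X]
    (hj : IsOpenEmbedding j) (hy : MapClusterPt y (cocompact X) j) : y ∉ range j := by
  rintro ⟨x, rfl⟩
  rw [MapClusterPt, clusterPt_iff_not_disjoint, ← hj.map_nhds_eq,
    disjoint_map hj.injective] at hy
  exact hy (disjoint_nhds_cocompact x)

end ClusterPoints

theorem class_at_infinity_of_unbounded_general
    {X : Type*} [TopologicalSpace X] [LocallyCompactSpace X]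
    [T2Space X]
    (F : Set (X × X))
    (E : Set X) (hE : IsCompact E)
    (hbig : ∀ U : Set X, E ⊆ interior U →
      ¬ IsCompact (closure (relImage F U ∩ relImage (relInv F) U)))
    {Xh : Type*} [TopologicalSpace Xh] [CompactSpace Xh] [T2Space Xh]
    (j : X → Xh) (hj : Topology.IsEmbedding j)
    (hopen : IsOpen (Set.range j)) :
    ∃ z : Xh, z ∉ Set.range j ∧ ∃ a ∈ E, ∃ b ∈ E,
      (j a, z) ∈ closure (Prod.map j j '' F) ∧
      (z, j b) ∈ closure (Prod.map j j '' F) := by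
  have := escapingChains_neBot hbig
  obtain ⟨⟨α, z, β⟩, hc⟩ : ∃ c, MapClusterPt c (escapingChains F E)
      (fun p : X × X × X => (j p.1, j p.2.1, j p.2.2)) :=
    exists_clusterPt_of_compactSpace _
  obtain ⟨a, haE, rfl⟩ := mem_image_of_mapClusterPt_nhdsSet hj.continuous hE
    ((hc.continuousAt_comp (f := Prod.fst) (by fun_prop)).of_comp tendsto_fst_escapingChains)
  obtain ⟨b, hbE, rfl⟩ := mem_image_of_mapClusterPt_nhdsSet hj.continuous hE
    ((hc.continuousAt_comp (f := fun q : Xh × Xh × Xh => q.2.2) (by fun_prop)).of_comp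
      tendsto_snd_snd_escapingChains)
  refine ⟨z, notMem_range_of_mapClusterPt_cocompact ⟨hj, hopen⟩
    ((hc.continuousAt_comp (f := fun q : Xh × Xh × Xh => q.2.1) (by fun_prop)).of_comp
      tendsto_snd_fst_escapingChains), a, haE, b, hbE, ?_, ?_⟩
  · exact isClosed_closure.mem_of_mapClusterPt
      (hc.continuousAt_comp (f := fun q : Xh × Xh × Xh => (q.1, q.2.1)) (by fun_prop))
      (eventually_fst_mem_escapingChains.mono fun p hp => subset_closure ⟨_, hp, rfl⟩)
  · exact isClosed_closure.mem_of_mapClusterPt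
      (hc.continuousAt_comp (f := Prod.snd) (by fun_prop))
      (eventually_snd_mem_escapingChains.mono fun p hp => subset_closure ⟨_, hp, rfl⟩)

/-- Let `F` be a closed transitive relation on a locally compact,
σ-compact Hausdorff space `X`, and `E = F(x₀) ∩ F⁻¹(x₀)` a compact equivalence class
of a point `x₀` with `(x₀,x₀) ∈ F`.  If for every neighborhood `U` of `E` the set
`F(U) ∩ F⁻¹(U)` does not have compact closure, then in every proper compactification
`(Xh, j)` there is a point `z` at infinity with `(j a, z), (z, j b) ∈ F̂` for some
`a, b ∈ E`. -/
theorem class_at_infinity_of_unbounded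
    {X : Type*} [TopologicalSpace X] [LocallyCompactSpace X]
    [SigmaCompactSpace X] [T2Space X]
    (F : Set (X × X)) (hF : IsClosed F) (hFt : RelTrans F)
    (E : Set X) (hE : IsCompact E)
    (x₀ : X) (hx₀E : x₀ ∈ E) (hx₀F : (x₀, x₀) ∈ F)
    (hEeq : E = relImage F {x₀} ∩ relImage (relInv F) {x₀})
    (hbig : ∀ U : Set X, E ⊆ interior U →
      ¬ IsCompact (closure (relImage F U ∩ relImage (relInv F) U)))
    {Xh : Type*} [TopologicalSpace Xh] [CompactSpace Xh] [T2Space Xh]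
    (j : X → Xh) (hj : Topology.IsEmbedding j)
    (hopen : IsOpen (Set.range j)) (hdense : Dense (Set.range j)) :
    ∃ z : Xh, z ∉ Set.range j ∧ ∃ a ∈ E, ∃ b ∈ E,
      (j a, z) ∈ closure (Prod.map j j '' F) ∧
      (z, j b) ∈ closure (Prod.map j j '' F) :=
  class_at_infinity_of_unbounded_general F E hE hbig j hj hopen
end

section
/- Let T be a closed subset of ℝ such that: (i) t, s ∈ T implies t + s ∈ T; (ii) t ∈ T implies t − 1 ∈ T; (iii) there exists t ∈ T with t > 0. Then either T = ℝ, or there exists a positive integer N such that T = { k / N : k ∈ ℤ }. In particular, T is an additive subgroup of ℝ. -/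
/-!
Let `d` be the infimum of the positive elements of `T`. If `d = 0`, `T` contains arbitrarily
small `s > 0`, and the elements `m s - n` (`m ≥ 1`, `n ≥ 0`) come within `s` of every real, so
`T` is dense and, being closed, equal to `ℝ`. If `d > 0`, closedness gives `d ∈ T`; the element
`⌈1/d⌉ d - 1` of `T` lies in `[0, d)`, so it vanishes and `d = 1/N`. Then
`x - 1/N = x + (N - 1)/N - 1 ∈ T` for every `x ∈ T`, so `T ⊇ ℤ/N`, and reducing `x ∈ T` modulo
`d` leaves an element of `T ∩ [0, d)`, which must be `0`; hence `T = ℤ/N`.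
-/

open Set

section ClosedSubsemigroup

variable {T : Set ℝ}

theorem sub_natCast_mem (hsub : ∀ t ∈ T, t - 1 ∈ T) {x : ℝ} (hx : x ∈ T) (n : ℕ) :
    x - n ∈ T := by
  induction n with
  | zero => simpa using hx
  | succ n ih => simpa [sub_sub] using hsub _ ih

theorem add_natCast_mul_mem (hadd : ∀ t ∈ T, ∀ s ∈ T, t + s ∈ T) {d x : ℝ} (hd : d ∈ T)
    (hx : x ∈ T) (n : ℕ) : x + n * d ∈ T := by
  induction n with
  | zero => simpa using hx
  | succ n ih => simpa [add_mul, add_assoc] using hadd _ ih d hd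

theorem exists_mem_Ioc_add (hadd : ∀ t ∈ T, ∀ s ∈ T, t + s ∈ T) (hsub : ∀ t ∈ T, t - 1 ∈ T)
    {s : ℝ} (hs : s ∈ T) (hs0 : 0 < s) (x : ℝ) : ∃ y ∈ T, y ∈ Ioc x (x + s) := by
  set n := ⌈-x⌉₊
  set k := ⌊(x + n) / s⌋₊
  have hxn : 0 ≤ x + n := by linarith [Nat.le_ceil (-x)]
  have hk : k * s ≤ x + n := (le_div_iff₀ hs0).1 (Nat.floor_le (div_nonneg hxn hs0.le))
  have hk' : x + n < (k + 1) * s := (div_lt_iff₀ hs0).1 (Nat.lt_floor_add_one _)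
  refine ⟨s + k * s - n, sub_natCast_mem hsub (add_natCast_mul_mem hadd hs hs k) n, ?_, ?_⟩
  · linarith
  · linarith

theorem dense_of_forall_exists_mem_Ioo (hadd : ∀ t ∈ T, ∀ s ∈ T, t + s ∈ T)
    (hsub : ∀ t ∈ T, t - 1 ∈ T) (h : ∀ ε > 0, ∃ s ∈ T, s ∈ Ioo 0 ε) : Dense T := by
  refine Metric.dense_iff.2 fun x r hr => ?_
  obtain ⟨s, hs, hs0, hsr⟩ := h r hr
  obtain ⟨y, hy, hxy, hyx⟩ := exists_mem_Ioc_add hadd hsub hs hs0 x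
  refine ⟨y, ?_, hy⟩
  rw [Metric.mem_ball, Real.dist_eq, abs_lt]
  constructor <;> linarith

section Discrete

variable {d : ℝ}

theorem exists_eq_inv_natCast_of_isLeast (hadd : ∀ t ∈ T, ∀ s ∈ T, t + s ∈ T)
    (hsub : ∀ t ∈ T, t - 1 ∈ T) (hd : IsLeast (T ∩ Ioi 0) d) :
    ∃ N : ℕ, 0 < N ∧ d = (N : ℝ)⁻¹ := by
  obtain ⟨⟨hdT, hd0 : 0 < d⟩, hmin⟩ := hd
  set N := ⌈d⁻¹⌉₊
  have hN : 0 < N := Nat.ceil_pos.2 (inv_pos.2 hd0)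
  have hN1 : 1 ≤ N * d := (inv_le_iff_one_le_mul₀ hd0).1 (Nat.le_ceil _)
  have hN2 : N * d < 1 + d := by
    have := mul_lt_mul_of_pos_right (Nat.ceil_lt_add_one (inv_nonneg.2 hd0.le)) hd0
    rwa [add_mul, inv_mul_cancel₀ hd0.ne', one_mul] at this
  have hmem : (N : ℝ) * d - 1 ∈ T := by
    convert sub_natCast_mem hsub (add_natCast_mul_mem hadd hdT hdT (N - 1)) 1 using 1
    rw [Nat.cast_sub hN]
    push_cast
    ring
  have hNd : (N : ℝ) * d = 1 := by
    refine le_antisymm (not_lt.1 fun h => ?_) hN1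
    linarith [hmin ⟨hmem, show 0 < (N : ℝ) * d - 1 by linarith⟩]
  exact ⟨N, hN, eq_inv_of_mul_eq_one_right hNd⟩

theorem zsmul_inv_natCast_mem (hadd : ∀ t ∈ T, ∀ s ∈ T, t + s ∈ T)
    (hsub : ∀ t ∈ T, t - 1 ∈ T) {N : ℕ} (hN : 0 < N) (hNT : (N : ℝ)⁻¹ ∈ T) (k : ℤ) :
    k • (N : ℝ)⁻¹ ∈ T := by
  have hsub_inv : ∀ x ∈ T, x - (N : ℝ)⁻¹ ∈ T := fun x hx => by
    convert sub_natCast_mem hsub (add_natCast_mul_mem hadd hNT hx (N - 1)) 1 using 1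
    rw [Nat.cast_sub hN]
    field_simp
    ring
  induction k using Int.induction_on with
  | zero => simpa using hsub_inv _ hNT
  | succ i ih => simpa [add_smul] using hadd _ ih _ hNT
  | pred i ih => simpa [sub_smul] using hsub_inv _ ih

theorem mem_zmultiples_of_isLeast (hadd : ∀ t ∈ T, ∀ s ∈ T, t + s ∈ T)
    (hd : IsLeast (T ∩ Ioi 0) d) (hzsmul : ∀ k : ℤ, k • d ∈ T) {x : ℝ} (hx : x ∈ T) :
    x ∈ AddSubgroup.zmultiples d := by
  have hd0 : 0 < d := hd.1.2
  set k := toIcoDiv hd0 0 x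
  have hIco : x - k • d ∈ Ico 0 d := by
    rw [self_sub_toIcoDiv_zsmul]
    simpa using toIcoMod_mem_Ico' hd0 x
  have hmem : x - k • d ∈ T := by
    rw [sub_eq_add_neg, ← neg_zsmul]
    exact hadd _ hx _ (hzsmul _)
  have hzero : x - k • d = 0 :=
    le_antisymm (not_lt.1 fun h => (hd.2 ⟨hmem, h⟩).not_gt hIco.2) hIco.1
  exact AddSubgroup.mem_zmultiples_iff.2 ⟨k, (sub_eq_zero.1 hzero).symm⟩

theorem exists_eq_zmultiples_of_isLeast (hadd : ∀ t ∈ T, ∀ s ∈ T, t + s ∈ T)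
    (hsub : ∀ t ∈ T, t - 1 ∈ T) (hd : IsLeast (T ∩ Ioi 0) d) :
    ∃ N : ℕ, 0 < N ∧ T = AddSubgroup.zmultiples (N : ℝ)⁻¹ := by
  obtain ⟨N, hN, rfl⟩ := exists_eq_inv_natCast_of_isLeast hadd hsub hd
  have hzsmul := zsmul_inv_natCast_mem hadd hsub hN hd.1.1
  refine ⟨N, hN, Subset.antisymm (fun x hx => mem_zmultiples_of_isLeast hadd hd hzsmul hx) ?_⟩
  rintro _ ⟨k, rfl⟩
  exact hzsmul k

end Discrete

theorem eq_univ_or_exists_eq_zmultiples_inv_natCast (hT : IsClosed T)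
    (hadd : ∀ t ∈ T, ∀ s ∈ T, t + s ∈ T) (hsub : ∀ t ∈ T, t - 1 ∈ T) (hpos : ∃ t ∈ T, 0 < t) :
    T = univ ∨ ∃ N : ℕ, 0 < N ∧ T = AddSubgroup.zmultiples (N : ℝ)⁻¹ := by
  obtain ⟨t, ht, ht0⟩ := hpos
  have hne : (T ∩ Ioi 0).Nonempty := ⟨t, ht, ht0⟩
  have hbdd : BddBelow (T ∩ Ioi 0) := ⟨0, fun _ hy => le_of_lt hy.2⟩
  rcases (le_csInf hne fun _ hy => le_of_lt hy.2).eq_or_lt with hinf | hinf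
  · have hdense : Dense T := dense_of_forall_exists_mem_Ioo hadd hsub fun ε hε => by
      obtain ⟨s, ⟨hs, hs0⟩, hsε⟩ := exists_lt_of_csInf_lt hne (hinf ▸ hε)
      exact ⟨s, hs, hs0, hsε⟩
    exact Or.inl (by rw [← hT.closure_eq, hdense.closure_eq])
  · have hmem : sInf (T ∩ Ioi 0) ∈ T :=
      closure_minimal inter_subset_left hT (csInf_mem_closure hne hbdd)
    exact Or.inr (exists_eq_zmultiples_of_isLeast hadd hsub
      ⟨⟨hmem, hinf⟩, fun _ hy => csInf_le hbdd hy⟩)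

end ClosedSubsemigroup

theorem coe_zmultiples_inv_natCast (N : ℕ) :
    (AddSubgroup.zmultiples (N : ℝ)⁻¹ : Set ℝ) = {x : ℝ | ∃ k : ℤ, x = (k : ℝ) / (N : ℝ)} := by
  ext x
  simp [AddSubgroup.mem_zmultiples_iff, div_eq_mul_inv, eq_comm]

/-- Let `T ⊆ ℝ` be closed, closed under addition, closed under
subtraction of `1`, and containing some positive element.  Then either `T = ℝ` or
`T = (1/N)ℤ` for some positive integer `N`; in particular `T` is an additive
subgroup of `ℝ`. -/
theorem closed_subsemigroup_real
    (T : Set ℝ) (hT : IsClosed T)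
    (hadd : ∀ t ∈ T, ∀ s ∈ T, t + s ∈ T)
    (hsub : ∀ t ∈ T, t - 1 ∈ T)
    (hpos : ∃ t ∈ T, 0 < t) :
    (T = Set.univ ∨ ∃ N : ℕ, 0 < N ∧ T = {x : ℝ | ∃ k : ℤ, x = (k : ℝ) / (N : ℝ)}) ∧
      ∃ S : AddSubgroup ℝ, (S : Set ℝ) = T := by
  rcases eq_univ_or_exists_eq_zmultiples_inv_natCast hT hadd hsub hpos with rfl | ⟨N, hN, rfl⟩
  · exact ⟨Or.inl rfl, ⊤, AddSubgroup.coe_top⟩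
  · exact ⟨Or.inr ⟨N, hN, coe_zmultiples_inv_natCast N⟩, _, rfl⟩
end
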